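/- Decoupling of the quadratic charges (Theorem 2.1, second part, density/bilinear-form version). Let V be a complex vector space with a symmetric bilinear form B, let Γ_k(z) = Σ_{α∈Σ_k} Σ_{p=0}^{m_α−1} v^α_p (z−z_α)^{−(p+1)} (v^α_p ∈ V, k = 1,2) be V-valued rational functions with the same poles and pole orders as χ_k, and set Γ_γ(z) = Γ_1(z) + Γ_2(z − γ^{−1}). Define Q_i(γ) = −B(Γ_γ(ζ_i(γ)), Γ_γ(ζ_i(γ)))/(2 φ_γ'(ζ_i(γ))), and set Q^{(1)}_i = −B(Γ_1(ζ^{(1)}_i), Γ_1(ζ^{(1)}_i))/(2 φ_1'(ζ^{(1)}_i)) for i ≤ M_1 and Q^{(2)}_i = −B(Γ_2(ζ^{(2)}_i), Γ_2(ζ^{(2)}_i))/(2 φ_2'(ζ^{(2)}_i)) for i > M_1. Then Q_i(γ) → Q^{(k)}_i as γ → 0 (with k = 1 for i ≤ M_1 and k = 2 for i > M_1); consequently, for any coefficients ε_1, …, ε_M ∈ ℂ, Σ_{i=1}^M ε_i Q_i(γ) → Σ_{i=1}^{M_1} ε_i Q^{(1)}_i + Σ_{i=M_1+1}^M ε_i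 Q^{(2)}_i as γ → 0 (the decoupling of the coupled Hamiltonian into the sum of the two Hamiltonians). -/

import Mathlib

open scoped BigOperators Topology
open Filter

/-- The partial-fraction part `χ(w)` of a twist function (site `a` has multiplicity `m a + 1`). -/
noncomputable def chiFun {n : ℕ} (z : Fin n → ℂ) (m : Fin n → ℕ)
    (l : Fin n → ℕ → ℂ) (w : ℂ) : ℂ :=
  ∑ a, ∑ p ∈ Finset.range (m a + 1), l a p / (w - z a) ^ (p + 1)

/-- A `V`-valued Gaudin Lax matrix `Γ(w) = Σ_α Σ_p v^α_p (w - z_α)^{-(p+1)}`. -/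
noncomputable def gamFun {n : ℕ} {V : Type*} [AddCommGroup V] [Module ℂ V]
    (z : Fin n → ℂ) (m : Fin n → ℕ) (v : Fin n → ℕ → V) (w : ℂ) : V :=
  ∑ a, ∑ p ∈ Finset.range (m a + 1), ((w - z a) ^ (p + 1))⁻¹ • v a p

/-!
`Γ_γ(w)` and `φ_γ'(w)` are fixed linear combinations of the pole coefficients
`(w - z_α)^{-(p+1)}` and `(w - γ⁻¹ - z_β)^{-(q+1)}` of the two configurations, so the charge
`Q_i(γ)` is a continuous function of these coefficients wherever its denominator does not vanish.
For `i ≤ M₁` the zero `ζ_i(γ)` tends to `ζ^{(1)}_i`, so the coefficients of the first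
configuration tend to their values at `ζ^{(1)}_i`, while `ζ_i(γ) - γ⁻¹` escapes to infinity and
the coefficients of the second configuration tend to `0`: in the limit only `Γ₁` and `φ₁'`
survive, which is `Q^{(1)}_i`. The case `i > M₁` is symmetric.
-/

section

open Bornology Finset

lemma Filter.Tendsto.add_cobounded {α E : Type*} [SeminormedAddCommGroup E] {l : Filter α}
    {f g : α → E} {a : E} (hf : Tendsto f l (𝓝 a)) (hg : Tendsto g l (cobounded E)) :
    Tendsto (fun x => f x + g x) l (cobounded E) := by
  rw [← tendsto_norm_atTop_iff_cobounded] at hg ⊢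
  refine tendsto_atTop_mono (fun x => ?_) (hf.norm.neg.add_atTop hg)
  have := norm_sub_le (f x + g x) (f x)
  rw [add_sub_cancel_left] at this
  linarith

lemma tendsto_ofReal_inv_nhdsNE_zero :
    Tendsto (fun γ : ℝ => (γ : ℂ)⁻¹) (𝓝[≠] 0) (cobounded ℂ) :=
  tendsto_inv₀_nhdsNE_zero.comp <| tendsto_nhdsWithin_of_tendsto_nhds_of_eventually_within _
    (Complex.continuous_ofReal.tendsto' 0 0 Complex.ofReal_zero |>.mono_left nhdsWithin_le_nhds)
    (eventually_nhdsWithin_of_forall fun _ h => Complex.ofReal_ne_zero.2 h)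

lemma tendsto_sum_mul_sum_elim {α ι κ R : Type*} [Fintype ι] [Fintype κ] [CommRing R]
    [TopologicalSpace R] [IsTopologicalRing R] {l : Filter α} {f : ι ⊕ κ → α → R}
    {g : ι → R} {h : κ → R} (hf : ∀ i, Tendsto (f i) l (𝓝 (Sum.elim g h i))) (c : ι ⊕ κ → R) :
    Tendsto (fun x => ∑ i, c i * f i x) l
      (𝓝 ((∑ i, c (.inl i) * g i) + ∑ j, c (.inr j) * h j)) := by
  simpa only [Fintype.sum_sum_type, Sum.elim_inl, Sum.elim_inr] using
    tendsto_finsetSum univ fun i _ => (hf i).const_mul (c i)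

variable {n : ℕ} {V : Type*} [AddCommGroup V] [Module ℂ V]

noncomputable def poleCoeff (z : Fin n → ℂ) (w : ℂ) : Fin n → ℕ → ℂ :=
  fun a p => ((w - z a) ^ (p + 1))⁻¹

def laxOfCoeff (m : Fin n → ℕ) (v : Fin n → ℕ → V) (c : Fin n → ℕ → ℂ) : V :=
  ∑ a, ∑ p ∈ range (m a + 1), c a p • v a p

/-- The derivative of `chiFun z m l` at `w` is `twistDerivOfCoeff m l (poleCoeff z w)`: the
entry `c a (p + 1)` plays the role of `(w - z a)^{-(p+2)}`. -/
def twistDerivOfCoeff (m : Fin n → ℕ) (l : Fin n → ℕ → ℂ) (c : Fin n → ℕ → ℂ) : ℂ :=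
  ∑ a, ∑ p ∈ range (m a + 1), -((p : ℂ) + 1) * l a p * c a (p + 1)

lemma gamFun_eq_laxOfCoeff (z : Fin n → ℂ) (m : Fin n → ℕ) (v : Fin n → ℕ → V) (w : ℂ) :
    gamFun z m v w = laxOfCoeff m v (poleCoeff z w) := rfl

@[simp] lemma laxOfCoeff_zero (m : Fin n → ℕ) (v : Fin n → ℕ → V) : laxOfCoeff m v 0 = 0 := by
  simp [laxOfCoeff]

@[simp] lemma twistDerivOfCoeff_zero (m : Fin n → ℕ) (l : Fin n → ℕ → ℂ) :
    twistDerivOfCoeff m l 0 = 0 := by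
  simp [twistDerivOfCoeff]

lemma continuous_twistDerivOfCoeff (m : Fin n → ℕ) (l : Fin n → ℕ → ℂ) :
    Continuous (twistDerivOfCoeff m l) := by
  unfold twistDerivOfCoeff
  fun_prop

lemma continuous_quadratic_laxOfCoeff_add {n' : ℕ} (B : V →ₗ[ℂ] V →ₗ[ℂ] ℂ) (m : Fin n → ℕ)
    (v : Fin n → ℕ → V) (m' : Fin n' → ℕ) (v' : Fin n' → ℕ → V) :
    Continuous fun c : (Fin n → ℕ → ℂ) × (Fin n' → ℕ → ℂ) =>
      B (laxOfCoeff m v c.1 + laxOfCoeff m' v' c.2)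
        (laxOfCoeff m v c.1 + laxOfCoeff m' v' c.2) := by
  simp only [laxOfCoeff, map_add, map_sum, map_smul, LinearMap.add_apply, LinearMap.sum_apply,
    LinearMap.smul_apply, smul_eq_mul]
  fun_prop

lemma tendsto_poleCoeff_nhds {α : Type*} {l : Filter α} {u : α → ℂ} {w : ℂ} {z : Fin n → ℂ}
    (hu : Tendsto u l (𝓝 w)) (hw : ∀ a, w ≠ z a) :
    Tendsto (fun x => poleCoeff z (u x)) l (𝓝 (poleCoeff z w)) :=
  tendsto_pi_nhds.2 fun a => tendsto_pi_nhds.2 fun _ =>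
    ((hu.sub_const _).pow _).inv₀ (pow_ne_zero _ (sub_ne_zero.2 (hw a)))

lemma tendsto_poleCoeff_cobounded {α : Type*} {l : Filter α} {u : α → ℂ} {z : Fin n → ℂ}
    (hu : Tendsto u l (cobounded ℂ)) :
    Tendsto (fun x => poleCoeff z (u x)) l (𝓝 0) :=
  tendsto_pi_nhds.2 fun a => tendsto_pi_nhds.2 fun p => tendsto_inv₀_cobounded.comp <|
    (tendsto_pow_cobounded_cobounded p.succ_ne_zero).comp <|
      (tendsto_sub_const_cobounded (z a)).comp hu

lemma hasDerivAt_div_sub_pow (c z : ℂ) (p : ℕ) {w : ℂ} (hw : w ≠ z) :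
    HasDerivAt (fun w => c / (w - z) ^ (p + 1))
      (-((p : ℂ) + 1) * c * ((w - z) ^ (p + 2))⁻¹) w := by
  have hpow : HasDerivAt (fun w => (w - z) ^ (p + 1)) (((p : ℂ) + 1) * (w - z) ^ p) w := by
    simpa using ((hasDerivAt_id w).sub_const z).fun_pow (p + 1)
  have hw' : w - z ≠ 0 := sub_ne_zero.2 hw
  have h := (hpow.inv (pow_ne_zero _ hw')).const_mul c
  refine (h.congr_deriv ?_).congr_of_eventuallyEq (.of_forall fun _ => div_eq_mul_inv _ _)
  field_simp
  ring

lemma hasDerivAt_chiFun (z : Fin n → ℂ) (m : Fin n → ℕ) (l : Fin n → ℕ → ℂ) {w : ℂ}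
    (hw : ∀ a, w ≠ z a) : HasDerivAt (chiFun z m l) (twistDerivOfCoeff m l (poleCoeff z w)) w :=
  HasDerivAt.fun_sum fun a _ => HasDerivAt.fun_sum fun p _ =>
    hasDerivAt_div_sub_pow (l a p) (z a) p (hw a)

lemma deriv_chiFun_sub_const (z : Fin n → ℂ) (m : Fin n → ℕ) (l : Fin n → ℕ → ℂ) (c : ℂ)
    {w : ℂ} (hw : ∀ a, w ≠ z a) :
    deriv (fun w => chiFun z m l w - c) w = twistDerivOfCoeff m l (poleCoeff z w) :=
  ((hasDerivAt_chiFun z m l hw).sub_const c).deriv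

noncomputable def quadraticCharge (B : V →ₗ[ℂ] V →ₗ[ℂ] ℂ) (Γ : V) (d : ℂ) : ℂ :=
  -(B Γ Γ) / (2 * d)

section Coupled

variable {n₁ n₂ : ℕ} (B : V →ₗ[ℂ] V →ₗ[ℂ] ℂ)
  (z1 : Fin n₁ → ℂ) (m1 : Fin n₁ → ℕ) (l1 : Fin n₁ → ℕ → ℂ) (v1 : Fin n₁ → ℕ → V)
  (z2 : Fin n₂ → ℂ) (m2 : Fin n₂ → ℕ) (l2 : Fin n₂ → ℕ → ℂ) (v2 : Fin n₂ → ℕ → V) (linf : ℂ)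

lemma deriv_chiFun_add_chiFun_comp_sub {w c : ℂ} (hw1 : ∀ a, w ≠ z1 a)
    (hw2 : ∀ b, w - c ≠ z2 b) :
    deriv (fun w => chiFun z1 m1 l1 w + chiFun z2 m2 l2 (w - c) - linf) w =
      twistDerivOfCoeff m1 l1 (poleCoeff z1 w) + twistDerivOfCoeff m2 l2 (poleCoeff z2 (w - c)) :=
  (((hasDerivAt_chiFun z1 m1 l1 hw1).add
    ((hasDerivAt_chiFun z2 m2 l2 hw2).comp_sub_const w c)).sub_const linf).deriv

lemma tendsto_quadraticCharge_of_tendsto_poleCoeff {α : Type*} {l : Filter α} {u s : α → ℂ}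
    {c : (Fin n₁ → ℕ → ℂ) × (Fin n₂ → ℕ → ℂ)}
    (hpoles : ∀ᶠ x in l, (∀ a, u x ≠ z1 a) ∧ ∀ b, u x - s x ≠ z2 b)
    (hc : Tendsto (fun x => (poleCoeff z1 (u x), poleCoeff z2 (u x - s x))) l (𝓝 c))
    (hc0 : twistDerivOfCoeff m1 l1 c.1 + twistDerivOfCoeff m2 l2 c.2 ≠ 0) :
    Tendsto (fun x => quadraticCharge B (gamFun z1 m1 v1 (u x) + gamFun z2 m2 v2 (u x - s x))
        (deriv (fun w => chiFun z1 m1 l1 w + chiFun z2 m2 l2 (w - s x) - linf) (u x))) l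
      (𝓝 (quadraticCharge B (laxOfCoeff m1 v1 c.1 + laxOfCoeff m2 v2 c.2)
        (twistDerivOfCoeff m1 l1 c.1 + twistDerivOfCoeff m2 l2 c.2))) := by
  have hcont : ContinuousAt (fun c : (Fin n₁ → ℕ → ℂ) × (Fin n₂ → ℕ → ℂ) =>
      quadraticCharge B (laxOfCoeff m1 v1 c.1 + laxOfCoeff m2 v2 c.2)
        (twistDerivOfCoeff m1 l1 c.1 + twistDerivOfCoeff m2 l2 c.2)) c :=
    (continuous_quadratic_laxOfCoeff_add B m1 v1 m2 v2).neg.continuousAt.div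
      (continuous_const.mul (((continuous_twistDerivOfCoeff m1 l1).comp continuous_fst).add
        ((continuous_twistDerivOfCoeff m2 l2).comp continuous_snd))).continuousAt
      (mul_ne_zero two_ne_zero hc0)
  refine (hcont.tendsto.comp hc).congr' ?_
  filter_upwards [hpoles] with x ⟨hx1, hx2⟩
  simp only [Function.comp_apply, gamFun_eq_laxOfCoeff,
    deriv_chiFun_add_chiFun_comp_sub z1 m1 l1 z2 m2 l2 linf hx1 hx2]

variable {M₁ M₂ : ℕ} {ζ1 : Fin M₁ → ℂ} {ζ2 : Fin M₂ → ℂ}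

lemma tendsto_quadraticCharge_coupled (hζ1p : ∀ i a, ζ1 i ≠ z1 a) (hζ2p : ∀ j a, ζ2 j ≠ z2 a)
    (hζ1s : ∀ i, deriv (fun w => chiFun z1 m1 l1 w - linf) (ζ1 i) ≠ 0)
    (hζ2s : ∀ j, deriv (fun w => chiFun z2 m2 l2 w - linf) (ζ2 j) ≠ 0)
    {α : Type*} {l : Filter α} {s : α → ℂ} (hs : Tendsto s l (cobounded ℂ))
    {ζ : Fin M₁ ⊕ Fin M₂ → α → ℂ} (h1 : ∀ i, Tendsto (ζ (.inl i)) l (𝓝 (ζ1 i)))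
    (h2 : ∀ j, Tendsto (fun x => ζ (.inr j) x - s x) l (𝓝 (ζ2 j))) (i : Fin M₁ ⊕ Fin M₂) :
    Tendsto (fun x => quadraticCharge B (gamFun z1 m1 v1 (ζ i x) + gamFun z2 m2 v2 (ζ i x - s x))
        (deriv (fun w => chiFun z1 m1 l1 w + chiFun z2 m2 l2 (w - s x) - linf) (ζ i x))) l
      (𝓝 (Sum.elim
        (fun i => quadraticCharge B (gamFun z1 m1 v1 (ζ1 i))
          (deriv (fun w => chiFun z1 m1 l1 w - linf) (ζ1 i)))
        (fun j => quadraticCharge B (gamFun z2 m2 v2 (ζ2 j))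
          (deriv (fun w => chiFun z2 m2 l2 w - linf) (ζ2 j))) i)) := by
  rcases i with i | j
  · have hfar : Tendsto (fun x => ζ (.inl i) x - s x) l (cobounded ℂ) := by
      simpa only [sub_eq_add_neg, Function.comp_apply] using
        (h1 i).add_cobounded (tendsto_neg_cobounded.comp hs)
    simp only [Sum.elim_inl, deriv_chiFun_sub_const _ _ _ _ (hζ1p i)]
    simpa [gamFun_eq_laxOfCoeff] using
      tendsto_quadraticCharge_of_tendsto_poleCoeff B z1 m1 l1 v1 z2 m2 l2 v2 linf
        ((eventually_all.2 fun a => (h1 i).eventually_ne (hζ1p i a)).and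
          (eventually_all.2 fun b => hfar.eventually_ne_cobounded (z2 b)))
        ((tendsto_poleCoeff_nhds (h1 i) (hζ1p i)).prodMk_nhds (tendsto_poleCoeff_cobounded hfar))
        (by simpa [deriv_chiFun_sub_const _ _ _ _ (hζ1p i)] using hζ1s i)
  · have hfar : Tendsto (ζ (.inr j)) l (cobounded ℂ) := by
      simpa only [sub_add_cancel] using (h2 j).add_cobounded hs
    simp only [Sum.elim_inr, deriv_chiFun_sub_const _ _ _ _ (hζ2p j)]
    simpa [gamFun_eq_laxOfCoeff] using
      tendsto_quadraticCharge_of_tendsto_poleCoeff B z1 m1 l1 v1 z2 m2 l2 v2 linf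
        ((eventually_all.2 fun a => hfar.eventually_ne_cobounded (z1 a)).and
          (eventually_all.2 fun b => (h2 j).eventually_ne (hζ2p j b)))
        ((tendsto_poleCoeff_cobounded hfar).prodMk_nhds (tendsto_poleCoeff_nhds (h2 j) (hζ2p j)))
        (by simpa [deriv_chiFun_sub_const _ _ _ _ (hζ2p j)] using hζ2s j)

end Coupled

end

theorem decoupling_of_quadratic_charges
    {n₁ n₂ M₁ M₂ : ℕ} {V : Type*} [AddCommGroup V] [Module ℂ V]
    (B : V →ₗ[ℂ] V →ₗ[ℂ] ℂ)
    (z1 : Fin n₁ → ℂ) (m1 : Fin n₁ → ℕ) (l1 : Fin n₁ → ℕ → ℂ)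
    (z2 : Fin n₂ → ℂ) (m2 : Fin n₂ → ℕ) (l2 : Fin n₂ → ℕ → ℂ)
    (linf : ℂ)
    (ζ1 : Fin M₁ → ℂ) (ζ2 : Fin M₂ → ℂ)
    (hζ1p : ∀ i a, ζ1 i ≠ z1 a) (hζ2p : ∀ j a, ζ2 j ≠ z2 a)
    (hζ1s : ∀ i, deriv (fun w => chiFun z1 m1 l1 w - linf) (ζ1 i) ≠ 0)
    (hζ2s : ∀ j, deriv (fun w => chiFun z2 m2 l2 w - linf) (ζ2 j) ≠ 0)
    (v1 : Fin n₁ → ℕ → V) (v2 : Fin n₂ → ℕ → V)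
    -- the zeros `ζ i γ` of the coupled twist function provided by the decoupling lemma,
    -- uniquely characterised by the asymptotics below
    (ε C : ℝ) (hε : 0 < ε)
    (ζ : Fin M₁ ⊕ Fin M₂ → ℝ → ℂ)
    (hζ : ∀ γ : ℝ, 0 < |γ| → |γ| < ε →
      (Function.Injective fun i => ζ i γ) ∧
      (∀ i, chiFun z1 m1 l1 (ζ i γ) + chiFun z2 m2 l2 (ζ i γ - (γ : ℂ)⁻¹) - linf = 0 ∧
        deriv (fun w => chiFun z1 m1 l1 w + chiFun z2 m2 l2 (w - (γ : ℂ)⁻¹) - linf)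
          (ζ i γ) ≠ 0) ∧
      (∀ i : Fin M₁, ‖ζ (Sum.inl i) γ - ζ1 i‖ ≤ C * |γ|) ∧
      (∀ j : Fin M₂, ‖ζ (Sum.inr j) γ - (γ : ℂ)⁻¹ - ζ2 j‖ ≤ C * |γ|)) :
    -- each coupled quadratic charge converges to the corresponding decoupled one …
    (∀ i : Fin M₁ ⊕ Fin M₂,
      Tendsto
        (fun γ : ℝ =>
          -(B (gamFun z1 m1 v1 (ζ i γ) + gamFun z2 m2 v2 (ζ i γ - (γ : ℂ)⁻¹))
              (gamFun z1 m1 v1 (ζ i γ) + gamFun z2 m2 v2 (ζ i γ - (γ : ℂ)⁻¹)))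
            / (2 * deriv
                (fun w => chiFun z1 m1 l1 w + chiFun z2 m2 l2 (w - (γ : ℂ)⁻¹) - linf)
                (ζ i γ)))
        (𝓝[≠] (0 : ℝ))
        (𝓝 (Sum.elim
          (fun i => -(B (gamFun z1 m1 v1 (ζ1 i)) (gamFun z1 m1 v1 (ζ1 i)))
            / (2 * deriv (fun w => chiFun z1 m1 l1 w - linf) (ζ1 i)))
          (fun j => -(B (gamFun z2 m2 v2 (ζ2 j)) (gamFun z2 m2 v2 (ζ2 j)))
            / (2 * deriv (fun w => chiFun z2 m2 l2 w - linf) (ζ2 j))) i))) ∧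
    -- … and consequently any linear combination of them converges to the decoupled sum
    (∀ eps : Fin M₁ ⊕ Fin M₂ → ℂ,
      Tendsto
        (fun γ : ℝ => ∑ i : Fin M₁ ⊕ Fin M₂, eps i *
          (-(B (gamFun z1 m1 v1 (ζ i γ) + gamFun z2 m2 v2 (ζ i γ - (γ : ℂ)⁻¹))
              (gamFun z1 m1 v1 (ζ i γ) + gamFun z2 m2 v2 (ζ i γ - (γ : ℂ)⁻¹)))
            / (2 * deriv
                (fun w => chiFun z1 m1 l1 w + chiFun z2 m2 l2 (w - (γ : ℂ)⁻¹) - linf)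
                (ζ i γ))))
        (𝓝[≠] (0 : ℝ))
        (𝓝 ((∑ i : Fin M₁, eps (Sum.inl i) *
            (-(B (gamFun z1 m1 v1 (ζ1 i)) (gamFun z1 m1 v1 (ζ1 i)))
              / (2 * deriv (fun w => chiFun z1 m1 l1 w - linf) (ζ1 i)))) +
          ∑ j : Fin M₂, eps (Sum.inr j) *
            (-(B (gamFun z2 m2 v2 (ζ2 j)) (gamFun z2 m2 v2 (ζ2 j)))
              / (2 * deriv (fun w => chiFun z2 m2 l2 w - linf) (ζ2 j)))))) := by
  have hγ : ∀ᶠ γ : ℝ in 𝓝[≠] 0, 0 < |γ| ∧ |γ| < ε :=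
    (eventually_nhdsWithin_of_forall fun _ h => abs_pos.2 h).and
      (eventually_nhdsWithin_of_eventually_nhds (by simpa using eventually_abs_sub_lt 0 hε))
  have hCγ : Tendsto (fun γ : ℝ => C * |γ|) (𝓝[≠] 0) (𝓝 0) := by
    simpa using ((continuous_abs.tendsto 0).const_mul C).mono_left nhdsWithin_le_nhds
  have key := tendsto_quadraticCharge_coupled B z1 m1 l1 v1 z2 m2 l2 v2 linf hζ1p hζ2p hζ1s hζ2s
    tendsto_ofReal_inv_nhdsNE_zero
    (fun i => tendsto_sub_nhds_zero_iff.1 <|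
      squeeze_zero_norm' (hγ.mono fun γ h => (hζ γ h.1 h.2).2.2.1 i) hCγ)
    (fun j => tendsto_sub_nhds_zero_iff.1 <|
      squeeze_zero_norm' (hγ.mono fun γ h => (hζ γ h.1 h.2).2.2.2 j) hCγ)
  exact ⟨key, tendsto_sum_mul_sum_elim key⟩
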